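/- Let G be a finite group of even order, let n ≥ 1, and let I and J be structure subgroups of odd order with δ_G(I) = n and δ_G(J) = n−1, such that X_J is an option of X_I. If X_J has no option X_L with |L| even and δ_G(L) = n−1, then X_I has no option X_K with |K| even and δ_G(K) = n. (In the paper's terminology: if X_J is rough, then so is X_I.) -/

import Mathlib

/-- ⌈P⌉: the intersection of all maximal subgroups of `G` containing `P`
(equal to `G`, i.e. `⊤`, if no maximal subgroup contains `P`). -/
def ceilSet {G : Type*} [Group G] (P : Set G) : Subgroup G :=
  sInf {M : Subgroup G | IsCoatom M ∧ P ⊆ (M : Set G)}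

/-- The deficiency of a subset `S` of a finite group `G`: the minimum size of a
subset `Q` of `G` such that `S ∪ Q` generates `G`. -/
noncomputable def deficiency {G : Type*} [Group G] [Fintype G] (S : Set G) : ℕ :=
  sInf {n : ℕ | ∃ Q : Finset G, Q.card = n ∧ Subgroup.closure (S ∪ (Q : Set G)) = ⊤}

/-- The structure class `X_J` is an option of the structure class `X_I`. -/
def IsStructOption {G : Type*} [Group G] (I J : Subgroup G) : Prop :=
  ∃ g ∉ I, ceilSet ((I : Set G) ∪ {g}) = J
/-
Write `J = ⌈I ∪ {h}⌉` and suppose `K = ⌈I ∪ {g}⌉` were an even option of `X_I` with `δ(K) = n`.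
Since `|K|` is even and `|J|` is odd, `K ⊄ J`, so `g ∉ J` and `L = ⌈J ∪ {g}⌉` is an option of `X_J`;
it contains `K`, hence has even order. Deficiency does not distinguish `P` from `⌈P⌉`, since a set
generates `G` iff no maximal subgroup contains it, and a maximal subgroup contains `P` iff it
contains `⌈P⌉`. So `δ(L) = δ(I ∪ {g, h}) = δ(K ∪ {h}) ≥ δ(K) - 1 = n - 1`, while
`δ(L) ≤ δ(J) = n - 1` as `J ⊆ L`.
Thus `X_L` is an even option of `X_J` of deficiency `n - 1`, and `X_J` is not rough.
-/

section ceilSet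

variable {G : Type*} [Group G]

lemma subset_ceilSet (P : Set G) : P ⊆ (ceilSet P : Set G) :=
  fun _ hx => Subgroup.mem_sInf.2 fun _ hM => hM.2 hx

lemma ceilSet_le_iff_of_isCoatom {P : Set G} {M : Subgroup G} (hM : IsCoatom M) :
    ceilSet P ≤ M ↔ P ⊆ M :=
  ⟨fun h => (subset_ceilSet P).trans h, fun h => sInf_le ⟨hM, h⟩⟩

lemma ceilSet_le_ceilSet_of_subset {P Q : Set G} (h : P ⊆ ceilSet Q) : ceilSet P ≤ ceilSet Q :=
  le_sInf fun _ hM => sInf_le ⟨hM.1, h.trans ((ceilSet_le_iff_of_isCoatom hM.1).2 hM.2)⟩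

lemma ceilSet_mono {P Q : Set G} (h : P ⊆ Q) : ceilSet P ≤ ceilSet Q :=
  ceilSet_le_ceilSet_of_subset (h.trans (subset_ceilSet Q))

lemma closure_eq_top_iff_forall_isCoatom [IsCoatomic (Subgroup G)] {S : Set G} :
    Subgroup.closure S = ⊤ ↔ ∀ M : Subgroup G, IsCoatom M → ¬ S ⊆ M := by
  refine ⟨fun h M hM hSM => hM.ne_top ?_, fun h => ?_⟩
  · rwa [eq_top_iff, ← h, Subgroup.closure_le]
  · refine (eq_top_or_exists_le_coatom (Subgroup.closure S)).resolve_right ?_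
    rintro ⟨M, hM, hSM⟩
    exact h M hM (Subgroup.subset_closure.trans hSM)

lemma closure_ceilSet_union_eq_top_iff [IsCoatomic (Subgroup G)] (P Q : Set G) :
    Subgroup.closure ((ceilSet P : Set G) ∪ Q) = ⊤ ↔ Subgroup.closure (P ∪ Q) = ⊤ := by
  simp only [closure_eq_top_iff_forall_isCoatom, Set.union_subset_iff]
  refine forall₂_congr fun M hM => ?_
  rw [SetLike.coe_subset_coe, ceilSet_le_iff_of_isCoatom hM]

end ceilSet

lemma even_card_of_le {G : Type*} [Group G] {H K : Subgroup G} (hH : Even (Nat.card H))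
    (hHK : H ≤ K) : Even (Nat.card K) :=
  even_iff_two_dvd.2 (hH.two_dvd.trans (Subgroup.card_dvd_of_le hHK))

section deficiency

variable {G : Type*} [Group G] [Fintype G]

lemma exists_card_eq_deficiency (S : Set G) :
    ∃ Q : Finset G, Q.card = deficiency S ∧ Subgroup.closure (S ∪ (Q : Set G)) = ⊤ :=
  Nat.sInf_mem (s := {n | ∃ Q : Finset G, Q.card = n ∧ Subgroup.closure (S ∪ (Q : Set G)) = ⊤})
    ⟨_, Finset.univ, rfl, by simp⟩

lemma deficiency_le_of_closure_union_eq_top {S : Set G} {Q : Finset G}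
    (h : Subgroup.closure (S ∪ (Q : Set G)) = ⊤) : deficiency S ≤ Q.card :=
  Nat.sInf_le ⟨Q, rfl, h⟩

lemma deficiency_anti {S T : Set G} (h : S ⊆ T) : deficiency T ≤ deficiency S := by
  obtain ⟨Q, hQ, hgen⟩ := exists_card_eq_deficiency S
  refine hQ ▸ deficiency_le_of_closure_union_eq_top (top_le_iff.1 ?_)
  exact hgen ▸ Subgroup.closure_mono (Set.union_subset_union_left _ h)

lemma deficiency_le_deficiency_union_singleton_add_one (S : Set G) (g : G) :
    deficiency S ≤ deficiency (S ∪ {g}) + 1 := by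
  classical
  obtain ⟨Q, hQ, hgen⟩ := exists_card_eq_deficiency (S ∪ {g})
  calc deficiency S ≤ (insert g Q).card := by
        refine deficiency_le_of_closure_union_eq_top ?_
        rwa [Finset.coe_insert, Set.insert_eq, ← Set.union_assoc]
    _ ≤ deficiency (S ∪ {g}) + 1 := hQ ▸ Finset.card_insert_le g Q

lemma deficiency_ceilSet_union (P Q : Set G) :
    deficiency ((ceilSet P : Set G) ∪ Q) = deficiency (P ∪ Q) := by
  simp only [deficiency, Set.union_assoc, closure_ceilSet_union_eq_top_iff]

lemma deficiency_ceilSet (P : Set G) : deficiency (ceilSet P : Set G) = deficiency P := by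
  simpa using deficiency_ceilSet_union P ∅

lemma deficiency_ceilSet_union_singleton_comm (P : Set G) (g h : G) :
    deficiency ((ceilSet (P ∪ {h}) : Set G) ∪ {g}) =
      deficiency ((ceilSet (P ∪ {g}) : Set G) ∪ {h}) := by
  rw [deficiency_ceilSet_union, deficiency_ceilSet_union, Set.union_right_comm]

end deficiency

theorem rough_of_rough_option_general {G : Type*} [Group G] [Fintype G]
    (n : ℕ) (I J : Subgroup G) (hJodd : Odd (Nat.card J))
    (hJdef : deficiency (J : Set G) = n - 1) (hopt : IsStructOption I J)
    (hrough : ¬ ∃ L : Subgroup G, IsStructOption J L ∧ Even (Nat.card L) ∧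
      deficiency (L : Set G) = n - 1) :
    ¬ ∃ K : Subgroup G, IsStructOption I K ∧ Even (Nat.card K) ∧
      deficiency (K : Set G) = n := by
  rintro ⟨K, ⟨g, -, rfl⟩, hKeven, hKdef⟩
  obtain ⟨h, -, rfl⟩ := hopt
  have hIJ : (I : Set G) ⊆ ceilSet (I ∪ {h}) := Set.subset_union_left.trans (subset_ceilSet _)
  have hgJ : g ∉ ceilSet (I ∪ {h}) := fun hg =>
    (Nat.not_even_iff_odd.2 hJodd) (even_card_of_le hKeven
      (ceilSet_le_ceilSet_of_subset (Set.union_subset hIJ (Set.singleton_subset_iff.2 hg))))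
  refine hrough ⟨_, ⟨g, hgJ, rfl⟩, even_card_of_le hKeven ?_, le_antisymm ?_ ?_⟩
  · exact ceilSet_mono (Set.union_subset_union_left _ hIJ)
  · exact hJdef ▸ deficiency_anti (Set.subset_union_left.trans (subset_ceilSet _))
  · have hKh := deficiency_le_deficiency_union_singleton_add_one (ceilSet (I ∪ {g}) : Set G) h
    rw [deficiency_ceilSet, deficiency_ceilSet_union_singleton_comm]
    omega

/-- Let `G` have even order, `n ≥ 1`, and let `X_I, X_J` be odd structure
classes with deficiencies `n` and `n-1` respectively such that `X_J` is an
option of `X_I`.  If `X_J` is rough (has no even option of deficiency `n-1`),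
then `X_I` is rough (has no even option of deficiency `n`). -/
theorem rough_of_rough_option {G : Type*} [Group G] [Fintype G]
    (heven : Even (Fintype.card G)) (n : ℕ) (hn : 1 ≤ n)
    (I J : Subgroup G) (hI : ceilSet (I : Set G) = I) (hJ : ceilSet (J : Set G) = J)
    (hIodd : Odd (Nat.card I)) (hJodd : Odd (Nat.card J))
    (hIdef : deficiency (I : Set G) = n) (hJdef : deficiency (J : Set G) = n - 1)
    (hopt : IsStructOption I J)
    (hrough : ¬ ∃ L : Subgroup G, IsStructOption J L ∧ Even (Nat.card L) ∧
      deficiency (L : Set G) = n - 1) :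
    ¬ ∃ K : Subgroup G, IsStructOption I K ∧ Even (Nat.card K) ∧
      deficiency (K : Set G) = n :=
  rough_of_rough_option_general n I J hJodd hJdef hopt hrough
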